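/- In Picaria, no reachable state has three-in-a-row for both players: if a state (c, t) is reachable from the initial state by legal play (where play continues only from states in which no player yet has three-in-a-row), then it is not the case that both X and O have three-in-a-row in c. In particular the three configurations consisting of one full column of X stones and one full column of O stones never occur in play. -/

import Mathlib

/-- The two players of Picaria. -/
inductive Player : Type
  | X : Player
  | O : Player
deriving DecidableEq

instance : Fintype Player :=
  ⟨{Player.X, Player.O}, fun x => by cases x <;> simp⟩

/-- The opponent of a player. -/
def Player.other : Player → Player
  | Player.X => Player.O
  | Player.O => Player.X

/-- A cell of the 3×3 board, written (row, column), 0-indexed. -/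
abbrev Cell : Type := Fin 3 × Fin 3

/-- A configuration assigns to each cell an optional stone. -/
abbrev Config : Type := Cell → Option Player

/-- King-move adjacency on the board: distinct cells whose coordinates
differ by at most 1 each. -/
def adjacent (a b : Cell) : Prop :=
  a ≠ b ∧ |((a.1 : ℕ) : ℤ) - ((b.1 : ℕ) : ℤ)| ≤ 1 ∧
    |((a.2 : ℕ) : ℤ) - ((b.2 : ℕ) : ℤ)| ≤ 1

/-- The 8 lines of the board: 3 rows, 3 columns, 2 main diagonals. -/
def lines : List (Cell × Cell × Cell) :=
  [((0,0),(0,1),(0,2)), ((1,0),(1,1),(1,2)), ((2,0),(2,1),(2,2)),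
   ((0,0),(1,0),(2,0)), ((0,1),(1,1),(2,1)), ((0,2),(1,2),(2,2)),
   ((0,0),(1,1),(2,2)), ((0,2),(1,1),(2,0))]

/-- Player `p` has three-in-a-row in configuration `c`. -/
def threeInARow (c : Config) (p : Player) : Prop :=
  ∃ l ∈ lines, c l.1 = some p ∧ c l.2.1 = some p ∧ c l.2.2 = some p

/-- The number of stones of player `p` on the board. -/
def stoneCount (c : Config) (p : Player) : ℕ :=
  (Finset.univ.filter fun x : Cell => c x = some p).card

/-- Legal moves of player `t` from configuration `c`, producing `c'`:
placement on an empty cell while `t` has fewer than 3 stones on the board;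
otherwise a slide of one of `t`'s stones to an adjacent empty cell. -/
def Move (t : Player) (c c' : Config) : Prop :=
  (stoneCount c t < 3 ∧ ∃ x : Cell, c x = none ∧ c' = Function.update c x (some t)) ∨
  (3 ≤ stoneCount c t ∧ ∃ x y : Cell, c x = some t ∧ c y = none ∧ adjacent x y ∧
    c' = Function.update (Function.update c x none) y (some t))

/-- `WinningFor p` is the least set of states (configuration, player to move) such that:
(i) `(c, p)` is winning for `p` if some legal move of `p` immediately makes a
three-in-a-row for `p`, or leads to a state winning for `p`;
(ii) `(c, q)` (for `q` the opponent of `p`) is winning for `p` if `q` has at least one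
legal move, and every legal move of `q` yields a configuration with no three-in-a-row
for `q` together with a state winning for `p`. -/
inductive WinningFor (p : Player) : Config × Player → Prop
  | moveWin (c c' : Config) (h : Move p c c') (hw : threeInARow c' p) :
      WinningFor p (c, p)
  | moveStep (c c' : Config) (h : Move p c c') (hw : WinningFor p (c', p.other)) :
      WinningFor p (c, p)
  | forced (c : Config) (hne : ∃ c', Move p.other c c')
      (hnowin : ∀ c', Move p.other c c' → ¬ threeInARow c' p.other)
      (hall : ∀ c', Move p.other c c' → WinningFor p (c', p)) :
      WinningFor p (c, p.other)

/-- Reachable states of Picaria: the initial state is reachable, and play continues by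
legal moves from any reachable state in which no player yet has three-in-a-row. -/
inductive Reachable : Config × Player → Prop
  | init : Reachable ((fun _ => none), Player.X)
  | step (c : Config) (t : Player) (c' : Config) :
      Reachable (c, t) → ¬ threeInARow c Player.X → ¬ threeInARow c Player.O →
      Move t c c' → Reachable (c', t.other)

lemma move_cell (t : Player) (c c' : Config) (h : Move t c c') (q : Player) (hq : q ≠ t)
    (z : Cell) (hz : c' z = some q) : c z = some q := by
  rcases h with ⟨-, x, hx, rfl⟩ | ⟨-, x, y, hx, hy, -, rfl⟩
  · by_cases hzx : z = x
    · subst hzx; rw [Function.update_self] at hz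
      exact absurd (Option.some.inj hz).symm hq
    · rwa [Function.update_of_ne hzx] at hz
  · by_cases hzy : z = y
    · subst hzy; rw [Function.update_self] at hz
      exact absurd (Option.some.inj hz).symm hq
    · rw [Function.update_of_ne hzy] at hz
      by_cases hzx : z = x
      · subst hzx; rw [Function.update_self] at hz; exact absurd hz (by simp)
      · rwa [Function.update_of_ne hzx] at hz

lemma move_preserve (t : Player) (c c' : Config) (h : Move t c c') (q : Player) (hq : q ≠ t)
    (h3 : threeInARow c' q) : threeInARow c q := by
  obtain ⟨l, hl, h1, h2, h3⟩ := h3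
  exact ⟨l, hl, move_cell t c c' h q hq _ h1, move_cell t c c' h q hq _ h2,
    move_cell t c c' h q hq _ h3⟩

/-- No reachable state has three-in-a-row for both players. -/
theorem picaria_no_double_three_in_a_row :
    ∀ (c : Config) (t : Player), Reachable (c, t) →
      ¬ (threeInARow c Player.X ∧ threeInARow c Player.O) := by
  intro c t h
  generalize hs : (c, t) = s at h
  induction h generalizing c t with
  | init =>
    obtain ⟨rfl, rfl⟩ := Prod.mk.injEq .. ▸ hs
    rintro ⟨⟨l, hl, h1, -⟩, -⟩
    simp at h1
  | step c0 t0 c0' _ hX hO hm _ =>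
    obtain ⟨h1, h2⟩ := Prod.mk.injEq .. ▸ hs
    subst h1; subst h2
    rintro ⟨hx, ho⟩
    cases t0 with
    | X => exact hO (move_preserve _ _ _ hm _ (by simp) ho)
    | O => exact hX (move_preserve _ _ _ hm _ (by simp) hx)
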